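/- Let k be a field, A a commutative k-algebra, M an A-module, V a k-vector space of finite dimension r with basis ξ_1,…,ξ_r, and φ : M → V* ⊗_k A an A-linear map; for ξ ∈ V and m ∈ M write ⟨ξ, φ(m)⟩ ∈ A for the evaluation. Let 0 ≤ κ ≤ r and suppose Fit_{κ−1}(coker φ) = 0. Set m := r − κ. Then for any elements ω_1,…,ω_m, ω ∈ M and any η ∈ V, letting a := det(⟨ξ_μ, φ(ω_ν)⟩)_{1≤μ,ν≤m} and, for 1 ≤ ν ≤ m, letting E_ν(η) be the determinant of the matrix (⟨ξ_μ, φ(ω_{ν'})⟩)_{μ,ν'} with its ν-th row replaced by (⟨η, φ(ω_1)⟩,…,⟨η, φ(ω_m)⟩), the identity ⟨η, φ(ω)⟩ · a = Σ_{ν=1}^{m} ⟨ξ_ν, φ(ω)⟩ · E_ν(η) holds in A. -/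

import Mathlib

/-! Consider the `(m+1) × (m+1)` matrix of pairings with rows indexed by `η, ξ_1, …, ξ_m` and
columns by `ω, ω_1, …, ω_m`. Its determinant is `k`-linear in `η`, and for `η` a basis vector it
is an `(m+1)`-minor of the presentation matrix of `coker φ`, hence zero by the Fitting hypothesis.
So it vanishes for every `η`, and expanding it along its first column gives the identity. -/

namespace Matrix

section Bordered

variable {R : Type*} {m : ℕ}

/-- The matrix `!![c, vᵀ; u, A]`. -/
def bordered (c : R) (u v : Fin m → R) (A : Matrix (Fin m) (Fin m) R) :
    Matrix (Fin (m + 1)) (Fin (m + 1)) R :=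
  of (Fin.cons (Fin.cons c v) fun μ => Fin.cons (u μ) (A μ))

theorem updateRow_bordered_zero (c c' : R) (u v v' : Fin m → R)
    (A : Matrix (Fin m) (Fin m) R) :
    (bordered c u v A).updateRow 0 (Fin.cons c' v') = bordered c' u v' A :=
  Fin.update_cons_zero (α := fun _ => Fin (m + 1) → R) _ _ _

variable [CommRing R]

theorem det_updateRow_eq_det_submatrix_bordered (c : R) (u v : Fin m → R)
    (A : Matrix (Fin m) (Fin m) R) (μ : Fin m) :
    (A.updateRow μ v).det =
      (-1) ^ (μ : ℕ) * ((bordered c u v A).submatrix μ.succ.succAbove Fin.succ).det := by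
  -- The minor keeps `v` on top of the rows of `A` other than `μ`; `μ.cycleRange` moves it down.
  have hperm : A.updateRow μ v =
      ((bordered c u v A).submatrix μ.succ.succAbove Fin.succ).submatrix μ.cycleRange id := by
    ext ρ ν
    rcases eq_or_ne ρ μ with rfl | hρ
    · simp [bordered, Fin.succAbove_cycleRange]
    · simp [bordered, Fin.succAbove_cycleRange, updateRow_ne hρ,
        Equiv.swap_apply_of_ne_of_ne (Fin.succ_ne_zero ρ) (Fin.succ_injective _ |>.ne hρ)]
  rw [hperm, det_permute, Fin.sign_cycleRange]
  simp

theorem det_bordered (c : R) (u v : Fin m → R) (A : Matrix (Fin m) (Fin m) R) :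
    (bordered c u v A).det = c * A.det - ∑ ν, u ν * (A.updateRow ν v).det := by
  rw [det_succ_column_zero, Fin.sum_univ_succ, sub_eq_add_neg, ← Finset.sum_neg_distrib]
  congr 1
  · have hA : (bordered c u v A).submatrix Fin.succ Fin.succ = A := by ext; simp [bordered]
    simp only [Fin.val_zero, pow_zero, one_mul, Fin.succAbove_zero, hA]
    simp [bordered]
  · refine Finset.sum_congr rfl fun ν _ => ?_
    rw [det_updateRow_eq_det_submatrix_bordered c u v]
    simp only [bordered, of_apply, Fin.cons_succ, Fin.cons_zero, Fin.val_succ]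
    ring

end Bordered

theorem det_updateRow_eq_zero_of_basis {k A V ι n : Type*} [CommRing k] [CommRing A]
    [Algebra k A] [AddCommGroup V] [Module k V] [Fintype n] [DecidableEq n]
    (b : Module.Basis ι k V) (f : V →ₗ[k] n → A) (N : Matrix n n A) (i : n)
    (h : ∀ l, (N.updateRow i (f (b l))).det = 0) (x : V) :
    (N.updateRow i (f x)).det = 0 := by
  let L : V →ₗ[k] A :=
    ((detRowAlternating.toMultilinearMap.toLinearMap N i).restrictScalars k) ∘ₗ f
  have hL : L = 0 := b.ext h
  exact LinearMap.congr_fun hL x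

end Matrix

open Matrix

theorem statement12 {k A M V : Type*}
    [Field k] [CommRing A] [Algebra k A]
    [AddCommGroup M] [Module A M]
    [AddCommGroup V] [Module k V]
    (r κ : ℕ) (b : Module.Basis (Fin r) k V)
    (φ : M →ₗ[A] (V →ₗ[k] A))
    (hFit : Ideal.span {d : A |
        ∃ (ω : Fin (r - κ + 1) → M) (s : Fin (r - κ + 1) → Fin r),
          d = Matrix.det (Matrix.of fun i j => φ (ω j) (b (s i)))} = ⊥)
    (ω : Fin (r - κ) → M) (ω₀ : M) (η : V) :
    φ ω₀ η *
        Matrix.det (Matrix.of fun μ ν => φ (ω ν) (b (Fin.castLE (Nat.sub_le r κ) μ))) =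
      ∑ ν : Fin (r - κ),
        φ ω₀ (b (Fin.castLE (Nat.sub_le r κ) ν)) *
          Matrix.det
            ((Matrix.of fun μ ν' => φ (ω ν') (b (Fin.castLE (Nat.sub_le r κ) μ))).updateRow
              ν (fun ν' => φ (ω ν') η)) := by
  set ξ : Fin (r - κ) → Fin r := Fin.castLE (Nat.sub_le r κ)
  set a : Matrix (Fin (r - κ)) (Fin (r - κ)) A := of fun μ ν => φ (ω ν) (b (ξ μ))
  let u : Fin (r - κ) → A := fun μ => φ ω₀ (b (ξ μ))
  let w : Fin (r - κ + 1) → M := Fin.cons ω₀ ω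
  let f : V →ₗ[k] Fin (r - κ + 1) → A := LinearMap.pi fun j => φ (w j)
  have hf (x : V) : f x = Fin.cons (φ ω₀ x) fun ν => φ (ω ν) x :=
    Fin.comp_cons (φ · x) ω₀ ω
  have hminor (s : Fin (r - κ + 1) → Fin r) :
      (of fun i j => φ (w j) (b (s i))).det = 0 :=
    Ideal.span_eq_bot.mp hFit _ ⟨_, s, rfl⟩
  have hbasis (l : Fin r) : ((bordered 0 u 0 a).updateRow 0 (f (b l))).det = 0 := by
    convert hminor (Fin.cons l ξ) using 2
    ext i j
    refine Fin.cases ?_ (fun μ => ?_) i <;> refine Fin.cases ?_ (fun ν => ?_) j <;>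
      simp [bordered, f, w, a, u]
  have hη := det_updateRow_eq_zero_of_basis b f (bordered 0 u 0 a) 0 hbasis η
  rw [hf, updateRow_bordered_zero, det_bordered, sub_eq_zero] at hη
  exact hη
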